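/- (Exactness of the synthesis reduction for polytopic constraints.) Consider the discrete-time linear time-varying system x_{t+1} = A_t x_t + B_t u_t + C_t a_t with horizon T, initial set B_δ(θ) with δ > 0, and adversary constraint Adv = { a : Σ_{s=0}^{T-1} ‖a_s‖² ≤ b } with b ≥ 0. Fix t ∈ {0,…,T} and a control sequence u, and suppose the Gramian W_t = Σ_{s=0}^{t-1} α(t,s+1) C_s C_sᵀ α(t,s+1)ᵀ and the matrix α(t,0) are invertible. Let P = { x ∈ ℝ^n : ∀ j, c_jᵀ x ≤ b_j } be a polytope, and for each j let m_j = max { c_jᵀ d : d ∈ R_t ⊕ B_t }, where R_t = { x : xᵀ W_t^{-1} x ≤ b } and B_t = { x : xᵀ (α(t,0) α(t,0)ᵀ)^{-1} x ≤ δ² }. Then Reach(B_δ(θ), u, Adv, t) ⊆ P if and only if c_jᵀ ξ(θ, u, 0, t) ≤ b_j − m_j for every j. -/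

import Mathlib

/-!
By linearity, the state at time `t` splits as `ξ(θ, u, 0, t) + Σ_{s<t} α(t,s+1) C_s a_s + α(t,0)(x₀ - θ)`.
The last term ranges exactly over the ellipsoid `B_t` as `x₀` ranges over `B_δ(θ)`. The middle term
ranges exactly over `R_t` as `a` ranges over the inputs of energy at most `b`: with `M_s = α(t,s+1) C_s`
and `W_t = Σ M_s M_sᵀ`, any input steering to `x` has energy `xᵀ W_t⁻¹ x + Σ ‖a_s - a*_s‖²`, where
`a*_s = M_sᵀ W_t⁻¹ x` is the minimum-energy input. Hence the reachable set is the translate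
`ξ(θ, u, 0, t) + (R_t ⊕ B_t)`, and a translate `ξ + S` lies in the half-space `cᵀ x ≤ β` iff
`cᵀ ξ + max_S cᵀ ≤ β`.
-/

open Finset Matrix Pointwise Metric

noncomputable section

/-- Transition matrix `α(t₁, t₀)`: `α(t₀,t₀) = I`, `α(t₁+1,t₀) = A t₁ * α(t₁,t₀)`. -/
def transMat {n : ℕ} (A : ℕ → Matrix (Fin n) (Fin n) ℝ) : ℕ → ℕ → Matrix (Fin n) (Fin n) ℝ
  | 0, _ => 1
  | t + 1, t0 => if t + 1 ≤ t0 then 1 else A t * transMat A t t0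

/-- State `x_t` of the system `x_{t+1} = A_t x_t + B_t u_t + C_t a_t`. -/
def traj {n m l : ℕ} (A : ℕ → Matrix (Fin n) (Fin n) ℝ)
    (B : ℕ → Matrix (Fin n) (Fin m) ℝ) (C : ℕ → Matrix (Fin n) (Fin l) ℝ)
    (x0 : EuclideanSpace ℝ (Fin n)) (u : ℕ → EuclideanSpace ℝ (Fin m))
    (a : ℕ → EuclideanSpace ℝ (Fin l)) : ℕ → EuclideanSpace ℝ (Fin n)
  | 0 => x0
  | t + 1 => WithLp.toLp 2 ((A t).mulVec (traj A B C x0 u a t) + (B t).mulVec (u t) + (C t).mulVec (a t))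

section MinimumEnergy

variable {ι m p : Type*} [Fintype m] [DecidableEq m] [Fintype p]

lemma EuclideanSpace.norm_sq_eq_dotProduct_self (v : EuclideanSpace ℝ p) :
    ‖v‖ ^ 2 = v ⬝ᵥ v := by
  rw [← real_inner_self_eq_norm_sq, EuclideanSpace.inner_eq_star_dotProduct, star_trivial]

def gramian (s : Finset ι) (M : ι → Matrix m p ℝ) : Matrix m m ℝ :=
  ∑ i ∈ s, M i * (M i)ᵀ

def minEnergyInput (s : Finset ι) (M : ι → Matrix m p ℝ) (x : m → ℝ) (i : ι) :
    EuclideanSpace ℝ p :=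
  WithLp.toLp 2 ((M i)ᵀ *ᵥ (gramian s M)⁻¹ *ᵥ x)

variable {s : Finset ι} {M : ι → Matrix m p ℝ}

lemma sum_dotProduct_minEnergyInput (x : m → ℝ) (a : ι → EuclideanSpace ℝ p) :
    ∑ i ∈ s, minEnergyInput s M x i ⬝ᵥ a i
      = (gramian s M)⁻¹ *ᵥ x ⬝ᵥ ∑ i ∈ s, M i *ᵥ a i := by
  simp only [minEnergyInput, mulVec_transpose, ← dotProduct_mulVec, dotProduct_sum]

lemma sum_mulVec_minEnergyInput (hW : IsUnit (gramian s M)) (x : m → ℝ) :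
    ∑ i ∈ s, M i *ᵥ minEnergyInput s M x i = x := by
  simp only [minEnergyInput, mulVec_mulVec, ← Matrix.mul_assoc]
  rw [← sum_mulVec, ← Finset.sum_mul, ← gramian,
    mul_nonsing_inv _ ((isUnit_iff_isUnit_det _).mp hW), one_mulVec]

lemma sum_norm_sq_minEnergyInput (hW : IsUnit (gramian s M)) (x : m → ℝ) :
    ∑ i ∈ s, ‖minEnergyInput s M x i‖ ^ 2 = x ⬝ᵥ (gramian s M)⁻¹ *ᵥ x := by
  simp only [EuclideanSpace.norm_sq_eq_dotProduct_self]
  rw [sum_dotProduct_minEnergyInput, sum_mulVec_minEnergyInput hW, dotProduct_comm]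

lemma sum_norm_sq_sub_minEnergyInput (hW : IsUnit (gramian s M)) {a : ι → EuclideanSpace ℝ p}
    {x : m → ℝ} (hx : ∑ i ∈ s, M i *ᵥ a i = x) :
    ∑ i ∈ s, ‖a i - minEnergyInput s M x i‖ ^ 2
      = ∑ i ∈ s, ‖a i‖ ^ 2 - x ⬝ᵥ (gramian s M)⁻¹ *ᵥ x := by
  have hcross : ∑ i ∈ s, inner ℝ (a i) (minEnergyInput s M x i) = x ⬝ᵥ (gramian s M)⁻¹ *ᵥ x := by
    simp only [EuclideanSpace.inner_eq_star_dotProduct, star_trivial]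
    rw [sum_dotProduct_minEnergyInput, hx, dotProduct_comm]
  simp only [norm_sub_sq_real, Finset.sum_add_distrib, Finset.sum_sub_distrib, ← Finset.mul_sum,
    hcross, sum_norm_sq_minEnergyInput hW]
  ring

lemma dotProduct_gramian_inv_mulVec_le (hW : IsUnit (gramian s M)) (a : ι → EuclideanSpace ℝ p) :
    (∑ i ∈ s, M i *ᵥ a i) ⬝ᵥ (gramian s M)⁻¹ *ᵥ (∑ i ∈ s, M i *ᵥ a i) ≤ ∑ i ∈ s, ‖a i‖ ^ 2 := by
  have h := sum_norm_sq_sub_minEnergyInput hW (a := a) rfl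
  have : 0 ≤ ∑ i ∈ s, ‖a i - minEnergyInput s M (∑ i ∈ s, M i *ᵥ a i) i‖ ^ 2 := by positivity
  linarith

lemma setOf_sum_mulVec_eq_setOf_dotProduct_gramian_inv_le {s' : Finset ι}
    (hss' : s ⊆ s') (hW : IsUnit (gramian s M)) (b : ℝ) :
    {x : EuclideanSpace ℝ m | ∃ a : ι → EuclideanSpace ℝ p,
        ∑ i ∈ s', ‖a i‖ ^ 2 ≤ b ∧ x = WithLp.toLp 2 (∑ i ∈ s, M i *ᵥ a i)}
      = {x : EuclideanSpace ℝ m | x ⬝ᵥ (gramian s M)⁻¹ *ᵥ x ≤ b} := by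
  classical
  ext x
  constructor
  · rintro ⟨a, hab, rfl⟩
    calc _ ≤ ∑ i ∈ s, ‖a i‖ ^ 2 := dotProduct_gramian_inv_mulVec_le hW a
      _ ≤ ∑ i ∈ s', ‖a i‖ ^ 2 := Finset.sum_le_sum_of_subset_of_nonneg hss' fun _ _ _ ↦ by positivity
      _ ≤ b := hab
  · intro hx
    refine ⟨fun i ↦ if i ∈ s then minEnergyInput s M x i else 0, ?_, ?_⟩
    · rw [← Finset.sum_subset hss' fun i _ hi ↦ by simp [hi]]
      simp +contextual only [if_true, sum_norm_sq_minEnergyInput hW]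
      exact hx
    · dsimp only
      rw [Finset.sum_congr rfl fun i hi ↦ by rw [if_pos hi], sum_mulVec_minEnergyInput hW]

end MinimumEnergy

lemma image_closedBall_eq_setOf_dotProduct_mul_transpose_inv_le {m : Type*} [Fintype m]
    [DecidableEq m] {α : Matrix m m ℝ} (hα : IsUnit α) {δ : ℝ} (hδ : 0 ≤ δ) :
    (fun v : EuclideanSpace ℝ m ↦ WithLp.toLp 2 (α *ᵥ v)) '' closedBall 0 δ
      = {x : EuclideanSpace ℝ m | x ⬝ᵥ (α * αᵀ)⁻¹ *ᵥ x ≤ δ ^ 2} := by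
  have hdet := (isUnit_iff_isUnit_det α).mp hα
  have hquad (x : m → ℝ) : x ⬝ᵥ (α * αᵀ)⁻¹ *ᵥ x = ‖WithLp.toLp 2 (α⁻¹ *ᵥ x)‖ ^ 2 := by
    rw [EuclideanSpace.norm_sq_eq_dotProduct_self, Matrix.mul_inv_rev, ← transpose_nonsing_inv,
      ← mulVec_mulVec, dotProduct_mulVec, vecMul_transpose]
  ext x
  simp only [Set.mem_image, mem_closedBall_zero_iff, Set.mem_ofPred_eq, hquad]
  constructor
  · rintro ⟨v, hv, rfl⟩
    rw [mulVec_mulVec, nonsing_inv_mul _ hdet, one_mulVec]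
    exact pow_le_pow_left₀ (norm_nonneg _) hv 2
  · intro hx
    refine ⟨_, (pow_le_pow_iff_left₀ (norm_nonneg _) hδ two_ne_zero).mp hx, ?_⟩
    rw [mulVec_mulVec, mul_nonsing_inv _ hdet, one_mulVec]

section Trajectory

variable {n m l : ℕ} (A : ℕ → Matrix (Fin n) (Fin n) ℝ)

lemma transMat_self (t : ℕ) : transMat A t t = 1 := by
  cases t <;> simp [transMat]

lemma transMat_succ_of_le {s t : ℕ} (h : s ≤ t) : transMat A (t + 1) s = A t * transMat A t s := by
  have : ¬ t + 1 ≤ s := by omega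
  simp [transMat, this]

lemma traj_eq_add (B : ℕ → Matrix (Fin n) (Fin m) ℝ) (C : ℕ → Matrix (Fin n) (Fin l) ℝ)
    (θ x0 : EuclideanSpace ℝ (Fin n)) (u : ℕ → EuclideanSpace ℝ (Fin m))
    (a : ℕ → EuclideanSpace ℝ (Fin l)) (t : ℕ) :
    traj A B C x0 u a t = traj A B C θ u (fun _ ↦ 0) t +
      (WithLp.toLp 2 (∑ s ∈ Finset.range t, (transMat A t (s + 1) * C s) *ᵥ a s)
        + WithLp.toLp 2 (transMat A t 0 *ᵥ (x0 - θ : EuclideanSpace ℝ (Fin n)))) := by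
  induction t with
  | zero => simp [traj, transMat]
  | succ t ih =>
    apply WithLp.ofLp_injective
    have hsum : ∑ s ∈ Finset.range t, (transMat A (t + 1) (s + 1) * C s) *ᵥ a s
        = A t *ᵥ ∑ s ∈ Finset.range t, (transMat A t (s + 1) * C s) *ᵥ a s := by
      rw [mulVec_sum]
      refine Finset.sum_congr rfl fun s hs ↦ ?_
      rw [transMat_succ_of_le A (Finset.mem_range.mp hs), mulVec_mulVec, Matrix.mul_assoc]
    simp only [traj, ih, WithLp.ofLp_add, WithLp.ofLp_toLp, Finset.sum_range_succ, hsum,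
      transMat_self, transMat_succ_of_le A t.zero_le, Matrix.one_mul, mulVec_add, mulVec_mulVec,
      WithLp.ofLp_zero, mulVec_zero]
    abel

end Trajectory

lemma vadd_subset_setOf_forall_dotProduct_le_iff {ι κ : Type*} [Fintype ι]
    {c : κ → EuclideanSpace ℝ ι} {β μ : κ → ℝ} {S : Set (EuclideanSpace ℝ ι)}
    (hμ : ∀ j, IsGreatest ((fun d : EuclideanSpace ℝ ι ↦ c j ⬝ᵥ d) '' S) (μ j))
    (ξ : EuclideanSpace ℝ ι) :
    ξ +ᵥ S ⊆ {x | ∀ j, c j ⬝ᵥ x ≤ β j} ↔ ∀ j, c j ⬝ᵥ ξ ≤ β j - μ j := by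
  simp only [Set.vadd_set_subset_iff, Set.mem_ofPred_eq, vadd_eq_add, WithLp.ofLp_add,
    dotProduct_add]
  constructor
  · intro h j
    obtain ⟨⟨d, hd, hdμ⟩, -⟩ := hμ j
    linarith [h hd j, hdμ]
  · intro h d hd j
    linarith [(hμ j).2 ⟨d, hd, rfl⟩, h j]

lemma setOf_traj_eq_vadd {n m l : ℕ} (A : ℕ → Matrix (Fin n) (Fin n) ℝ)
    (B : ℕ → Matrix (Fin n) (Fin m) ℝ) (C : ℕ → Matrix (Fin n) (Fin l) ℝ)
    (θ : EuclideanSpace ℝ (Fin n)) (δ : ℝ) (u : ℕ → EuclideanSpace ℝ (Fin m)) (b : ℝ) (T t : ℕ) :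
    {x : EuclideanSpace ℝ (Fin n) | ∃ x0 ∈ closedBall θ δ, ∃ a : ℕ → EuclideanSpace ℝ (Fin l),
        ∑ s ∈ Finset.range T, ‖a s‖ ^ 2 ≤ b ∧ x = traj A B C x0 u a t}
      = traj A B C θ u (fun _ ↦ 0) t +ᵥ
        ({x | ∃ a : ℕ → EuclideanSpace ℝ (Fin l), ∑ s ∈ Finset.range T, ‖a s‖ ^ 2 ≤ b ∧
            x = WithLp.toLp 2 (∑ s ∈ Finset.range t, (transMat A t (s + 1) * C s) *ᵥ a s)}
          + (fun v : EuclideanSpace ℝ (Fin n) ↦ WithLp.toLp 2 (transMat A t 0 *ᵥ v)) ''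
              closedBall 0 δ) := by
  ext x
  simp only [Set.mem_ofPred_eq, Set.mem_vadd_set, Set.mem_add, Set.mem_image, vadd_eq_add]
  constructor
  · rintro ⟨x0, hx0, a, ha, rfl⟩
    refine ⟨_, ⟨_, ⟨a, ha, rfl⟩, _, ⟨x0 - θ, ?_, rfl⟩, rfl⟩, (traj_eq_add A B C θ x0 u a t).symm⟩
    rwa [mem_closedBall_zero_iff, ← mem_closedBall_iff_norm]
  · rintro ⟨_, ⟨_, ⟨a, ha, rfl⟩, _, ⟨v, hv, rfl⟩, rfl⟩, rfl⟩
    refine ⟨θ + v, ?_, a, ha, ?_⟩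
    · rwa [mem_closedBall_iff_norm, add_sub_cancel_left, ← mem_closedBall_zero_iff]
    · rw [traj_eq_add A B C θ (θ + v), add_sub_cancel_left]

theorem synthesis_exact_polytope_general {n m l k : ℕ} (A : ℕ → Matrix (Fin n) (Fin n) ℝ)
    (B : ℕ → Matrix (Fin n) (Fin m) ℝ) (C : ℕ → Matrix (Fin n) (Fin l) ℝ)
    (T : ℕ) (δ : ℝ) (hδ : 0 < δ) (θ : EuclideanSpace ℝ (Fin n))
    (b : ℝ) (t : ℕ) (ht : t ≤ T)
    (u : ℕ → EuclideanSpace ℝ (Fin m))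
    (W : Matrix (Fin n) (Fin n) ℝ)
    (hW : W = ∑ s ∈ Finset.range t,
        transMat A t (s + 1) * C s * (C s)ᵀ * (transMat A t (s + 1))ᵀ)
    (hWinv : IsUnit W) (hα : IsUnit (transMat A t 0))
    (Rt Bt : Set (EuclideanSpace ℝ (Fin n)))
    (hRt : Rt = {x : EuclideanSpace ℝ (Fin n) | x ⬝ᵥ (W⁻¹).mulVec x ≤ b})
    (hBt : Bt = {x : EuclideanSpace ℝ (Fin n) | x ⬝ᵥ ((transMat A t 0 * (transMat A t 0)ᵀ)⁻¹).mulVec x ≤ δ ^ 2})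
    (c : Fin k → EuclideanSpace ℝ (Fin n)) (bnd : Fin k → ℝ)
    (P : Set (EuclideanSpace ℝ (Fin n)))
    (hP : P = {x : EuclideanSpace ℝ (Fin n) | ∀ j, c j ⬝ᵥ x ≤ bnd j})
    (msup : Fin k → ℝ)
    (hmsup : ∀ j, IsGreatest ((fun d : EuclideanSpace ℝ (Fin n) => c j ⬝ᵥ d) '' (Rt + Bt)) (msup j)) :
    {x : EuclideanSpace ℝ (Fin n) |
        ∃ x0 ∈ Metric.closedBall θ δ, ∃ a : ℕ → EuclideanSpace ℝ (Fin l),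
          (∑ s ∈ Finset.range T, ‖a s‖ ^ 2) ≤ b ∧ x = traj A B C x0 u a t} ⊆ P ↔
      ∀ j, c j ⬝ᵥ traj A B C θ u (fun _ => 0) t ≤ bnd j - msup j := by
  have hWgram : W = gramian (Finset.range t) fun s ↦ transMat A t (s + 1) * C s := by
    simp only [hW, gramian, transpose_mul, Matrix.mul_assoc]
  have hRt' : {x | ∃ a : ℕ → EuclideanSpace ℝ (Fin l), ∑ s ∈ Finset.range T, ‖a s‖ ^ 2 ≤ b ∧
      x = WithLp.toLp 2 (∑ s ∈ Finset.range t, (transMat A t (s + 1) * C s) *ᵥ a s)} = Rt := by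
    rw [hRt, hWgram]
    exact setOf_sum_mulVec_eq_setOf_dotProduct_gramian_inv_le
      (Finset.range_subset_range.mpr ht) (hWgram ▸ hWinv) b
  rw [setOf_traj_eq_vadd, hRt', image_closedBall_eq_setOf_dotProduct_mul_transpose_inv_le hα hδ.le,
    ← hBt, hP]
  exact vadd_subset_setOf_forall_dotProduct_le_iff hmsup _

/-- Exactness of the synthesis reduction for polytopic constraints: the
reachable set at time `t ≤ T` is contained in the polytope `P` iff the
adversary-free trajectory satisfies the bounds shifted by the attained maxima
of each linear functional over `R_t ⊕ B_t`. -/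
theorem synthesis_exact_polytope {n m l k : ℕ} (A : ℕ → Matrix (Fin n) (Fin n) ℝ)
    (B : ℕ → Matrix (Fin n) (Fin m) ℝ) (C : ℕ → Matrix (Fin n) (Fin l) ℝ)
    (T : ℕ) (δ : ℝ) (hδ : 0 < δ) (θ : EuclideanSpace ℝ (Fin n))
    (b : ℝ) (hb : 0 ≤ b) (t : ℕ) (ht : t ≤ T)
    (u : ℕ → EuclideanSpace ℝ (Fin m))
    (W : Matrix (Fin n) (Fin n) ℝ)
    (hW : W = ∑ s ∈ Finset.range t,
        transMat A t (s + 1) * C s * (C s)ᵀ * (transMat A t (s + 1))ᵀ)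
    (hWinv : IsUnit W) (hα : IsUnit (transMat A t 0))
    (Rt Bt : Set (EuclideanSpace ℝ (Fin n)))
    (hRt : Rt = {x : EuclideanSpace ℝ (Fin n) | x ⬝ᵥ (W⁻¹).mulVec x ≤ b})
    (hBt : Bt = {x : EuclideanSpace ℝ (Fin n) | x ⬝ᵥ ((transMat A t 0 * (transMat A t 0)ᵀ)⁻¹).mulVec x ≤ δ ^ 2})
    (c : Fin k → EuclideanSpace ℝ (Fin n)) (bnd : Fin k → ℝ)
    (P : Set (EuclideanSpace ℝ (Fin n)))
    (hP : P = {x : EuclideanSpace ℝ (Fin n) | ∀ j, c j ⬝ᵥ x ≤ bnd j})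
    (msup : Fin k → ℝ)
    (hmsup : ∀ j, IsGreatest ((fun d : EuclideanSpace ℝ (Fin n) => c j ⬝ᵥ d) '' (Rt + Bt)) (msup j)) :
    {x : EuclideanSpace ℝ (Fin n) |
        ∃ x0 ∈ Metric.closedBall θ δ, ∃ a : ℕ → EuclideanSpace ℝ (Fin l),
          (∑ s ∈ Finset.range T, ‖a s‖ ^ 2) ≤ b ∧ x = traj A B C x0 u a t} ⊆ P ↔
      ∀ j, c j ⬝ᵥ traj A B C θ u (fun _ => 0) t ≤ bnd j - msup j :=
  synthesis_exact_polytope_general A B C T δ hδ θ b t ht u W hW hWinv hα Rt Bt hRt hBt c bnd P hP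
    msup hmsup
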